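/- Let γ ∈ (0, 1), b₁, b₂ > 0, β₁, β₂ ∈ (0, 1], i ∈ {1, 2}, and data sizes n₁, n₂ > 1. Define firm i's readiness to collaborate f_i(n₁, n₂) = 2 b_i (n_i^{−β_i} − (n₁+n₂)^{−β_i}) − γ b_{−i} (n_{−i}^{−β_{−i}} − (n₁+n₂)^{−β_{−i}}). Then: (1) f_i is strictly decreasing in γ; (2) if β_j ln n_j > 1 for j = 1, 2, then f_i is strictly decreasing in β_i and strictly increasing in β_{−i}; (3) f_i is strictly increasing in b_i and strictly decreasing in b_{−i}. -/

import Mathlib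

/-!
Readiness is affine in `γ`, `b_i` and `b_{-i}`, with coefficients of fixed sign because
`n^{-β} - (n₁+n₂)^{-β} > 0`; this gives (1) and (3). For (2), the derivative of
`β ↦ a^{-β} - s^{-β}` (with `a < s`) is `log s · s^{-β} - log a · a^{-β}`, which is negative
because `t ↦ t e^{-βt}` decreases on `t ≥ 1/β` and `log s > log a ≥ 1/β`.
-/

open Real

/-- Firm `i`'s readiness to collaborate in the asymmetric-costs setting:
`f_i(n₁, n₂) = 2 b_i (n_i^{-β_i} - (n₁+n₂)^{-β_i}) - γ b_{-i} (n_{-i}^{-β_{-i}} -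
(n₁+n₂)^{-β_{-i}})`, written here with `ni` the firm's own data size and `no` the
opponent's. -/
noncomputable def readiness (γ bi bo βi βo ni no : ℝ) : ℝ :=
  2 * bi * (ni ^ (-βi) - (ni + no) ^ (-βi)) -
    γ * bo * (no ^ (-βo) - (ni + no) ^ (-βo))

lemma rpow_neg_sub_rpow_neg_pos {a s β : ℝ} (ha : 0 < a) (has : a < s) (hβ : 0 < β) :
    0 < a ^ (-β) - s ^ (-β) :=
  sub_pos.2 (rpow_lt_rpow_of_neg ha has (neg_neg_iff_pos.2 hβ))

lemma mul_exp_neg_mul_lt {β t u : ℝ} (ht : 0 < t) (htu : t < u) (hβt : 1 ≤ β * t) :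
    u * exp (-(β * u)) < t * exp (-(β * t)) := by
  have hgrowth : u < t * exp (β * (u - t)) := by
    have hβ : 0 < β := pos_of_mul_pos_left (one_pos.trans_le hβt) ht.le
    -- `t e^{β(u-t)} > t (1 + β(u-t)) ≥ t + (u-t)` since `βt ≥ 1`
    have hexp := add_one_lt_exp (mul_pos hβ (sub_pos.2 htu)).ne'
    nlinarith [mul_lt_mul_of_pos_left hexp ht]
  calc u * exp (-(β * u)) < t * exp (β * (u - t)) * exp (-(β * u)) :=
        mul_lt_mul_of_pos_right hgrowth (exp_pos _)
    _ = t * exp (-(β * t)) := by rw [mul_assoc, ← exp_add]; ring_nf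

lemma log_mul_rpow_neg_lt {a s β : ℝ} (ha : 1 < a) (has : a < s) (hβ : 1 ≤ β * log a) :
    log s * s ^ (-β) < log a * a ^ (-β) := by
  rw [rpow_def_of_pos (by linarith), rpow_def_of_pos (by linarith), mul_neg, mul_neg,
    mul_comm (log s) β, mul_comm (log a) β]
  exact mul_exp_neg_mul_lt (log_pos ha) (log_lt_log (by linarith) has) hβ

lemma hasDerivAt_const_rpow_neg {c : ℝ} (hc : 0 < c) (β : ℝ) :
    HasDerivAt (fun β => c ^ (-β)) (-(log c * c ^ (-β))) β :=
  ((hasStrictDerivAt_const_rpow hc (-β)).hasDerivAt.comp β (hasDerivAt_neg β)).congr_deriv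
    (by ring)

lemma strictAntiOn_rpow_neg_sub_rpow_neg {a s : ℝ} (ha : 1 < a) (has : a < s) :
    StrictAntiOn (fun β => a ^ (-β) - s ^ (-β)) (Set.Ici (log a)⁻¹) := by
  have hderiv (β : ℝ) : HasDerivAt (fun β => a ^ (-β) - s ^ (-β))
      (-(log a * a ^ (-β)) + log s * s ^ (-β)) β :=
    ((hasDerivAt_const_rpow_neg (by linarith) β).sub
      (hasDerivAt_const_rpow_neg (by linarith) β)).congr_deriv (by ring)
  refine strictAntiOn_of_deriv_neg (convex_Ici _)
    (continuous_iff_continuousAt.2 fun β => (hderiv β).continuousAt).continuousOn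
    fun β hβ => ?_
  rw [interior_Ici, Set.mem_Ioi, inv_lt_iff_one_lt_mul₀ (log_pos ha)] at hβ
  rw [(hderiv β).deriv]
  linarith [log_mul_rpow_neg_lt ha has hβ.le]

theorem readiness_monotonicity_general
    (γ bi bo βi βo ni no : ℝ)
    (hγ₁ : 0 < γ) (hbi : 0 < bi) (hbo : 0 < bo)
    (hβi : βi ∈ Set.Ioc (0 : ℝ) 1) (hβo : βo ∈ Set.Ioc (0 : ℝ) 1)
    (hni : 1 < ni) (hno : 1 < no) :
    (∀ γ' : ℝ, 0 < γ' → γ < γ' → γ' < 1 →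
      readiness γ' bi bo βi βo ni no < readiness γ bi bo βi βo ni no) ∧
    (1 < βi * Real.log ni → 1 < βo * Real.log no →
      (∀ β' : ℝ, β' ∈ Set.Ioc (0 : ℝ) 1 → βi < β' →
        readiness γ bi bo β' βo ni no < readiness γ bi bo βi βo ni no) ∧
      (∀ β' : ℝ, β' ∈ Set.Ioc (0 : ℝ) 1 → βo < β' →
        readiness γ bi bo βi βo ni no < readiness γ bi bo βi β' ni no)) ∧
    (∀ b' : ℝ, bi < b' →
      readiness γ bi bo βi βo ni no < readiness γ b' bo βi βo ni no) ∧
    (∀ b' : ℝ, bo < b' →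
      readiness γ bi b' βi βo ni no < readiness γ bi bo βi βo ni no) := by
  have hni_lt : ni < ni + no := by linarith
  have hno_lt : no < ni + no := by linarith
  have hAi := rpow_neg_sub_rpow_neg_pos (by linarith) hni_lt hβi.1
  have hAo := rpow_neg_sub_rpow_neg_pos (by linarith) hno_lt hβo.1
  have hanti {n β β' : ℝ} (hn : 1 < n) (hlt : n < ni + no) (hβ : 1 < β * log n) (hβ' : β < β') :
      n ^ (-β') - (ni + no) ^ (-β') < n ^ (-β) - (ni + no) ^ (-β) := by
    have hmem : β ∈ Set.Ici (log n)⁻¹ := (inv_le_iff_one_le_mul₀ (log_pos hn)).2 hβ.le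
    exact strictAntiOn_rpow_neg_sub_rpow_neg hn hlt hmem (hmem.trans hβ'.le) hβ'
  refine ⟨fun γ' _ hγ' _ => ?_, fun hi ho => ⟨fun β' _ hβ' => ?_, fun β' _ hβ' => ?_⟩,
    fun b' hb' => ?_, fun b' hb' => ?_⟩
  · unfold readiness; gcongr
  · have := hanti hni hni_lt hi hβ'
    unfold readiness; gcongr
  · have := hanti hno hno_lt ho hβ'
    unfold readiness; gcongr
  · unfold readiness; gcongr
  · unfold readiness; gcongr

/-- **Monotonicity of readiness to collaborate (asymmetric costs).** For `γ ∈ (0,1)`,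
`b_i, b_{-i} > 0`, `β_i, β_{-i} ∈ (0,1]`, and data sizes `n_i, n_{-i} > 1`:
(1) `f_i` is strictly decreasing in `γ`;
(2) if `β_j ln n_j > 1` for `j = 1, 2`, then `f_i` is strictly decreasing in `β_i` and
strictly increasing in `β_{-i}`;
(3) `f_i` is strictly increasing in `b_i` and strictly decreasing in `b_{-i}`. -/
theorem readiness_monotonicity
    (γ bi bo βi βo ni no : ℝ)
    (hγ₁ : 0 < γ) (hγ₂ : γ < 1) (hbi : 0 < bi) (hbo : 0 < bo)
    (hβi : βi ∈ Set.Ioc (0 : ℝ) 1) (hβo : βo ∈ Set.Ioc (0 : ℝ) 1)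
    (hni : 1 < ni) (hno : 1 < no) :
    (∀ γ' : ℝ, 0 < γ' → γ < γ' → γ' < 1 →
      readiness γ' bi bo βi βo ni no < readiness γ bi bo βi βo ni no) ∧
    (1 < βi * Real.log ni → 1 < βo * Real.log no →
      (∀ β' : ℝ, β' ∈ Set.Ioc (0 : ℝ) 1 → βi < β' →
        readiness γ bi bo β' βo ni no < readiness γ bi bo βi βo ni no) ∧
      (∀ β' : ℝ, β' ∈ Set.Ioc (0 : ℝ) 1 → βo < β' →
        readiness γ bi bo βi βo ni no < readiness γ bi bo βi β' ni no)) ∧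
    (∀ b' : ℝ, bi < b' →
      readiness γ bi bo βi βo ni no < readiness γ b' bo βi βo ni no) ∧
    (∀ b' : ℝ, bo < b' →
      readiness γ bi b' βi βo ni no < readiness γ bi bo βi βo ni no) :=
  readiness_monotonicity_general γ bi bo βi βo ni no hγ₁ hbi hbo hβi hβo hni hno
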